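/- With H and diagonal D as above and all D_l ≥ 0, the maximum absolute row sum of H D Hᵀ satisfies ‖H D Hᵀ‖_∞ ≤ max_{1≤i≤p} Σ_{l=0}^{p} D_{i+l} |θ_{p-l}| · Σ_{k=0}^{p} |θ_k|, and hence ‖H D Hᵀ‖₂ ≤ max_{1≤i≤p} Σ_{l=0}^{p} D_{i+l} |θ_{p-l}| · Σ_{k=0}^{p} |θ_k|. -/

import Mathlib

/-!
Entrywise, `|(H D Hᵀ)ᵢⱼ| ≤ ∑ₖ |Hᵢₖ| Dₖ |Hⱼₖ|`. Summing over `j` and using that a column of the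
band matrix `H` meets each coefficient `θₖ` at most once bounds the `i`-th absolute row sum by
`(∑ₖ |Hᵢₖ| Dₖ) · ∑ₖ |θₖ|`, and the first factor is `∑ₗ D_{i+l} |θ_{p-l}|`. The spectral bound is
the Schur test `‖A‖₂² ≤ ‖A‖₁ ‖A‖_∞`, which for the symmetric `H D Hᵀ` reduces to the row bound.
-/

/-- The spectral norm (operator norm induced by the Euclidean norm) of a real matrix. -/
noncomputable def matrixSpectralNorm {p m : ℕ} (A : Matrix (Fin p) (Fin m) ℝ) : ℝ :=
  ‖LinearMap.toContinuousLinearMap (Matrix.toEuclideanLin A)‖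

open Finset Matrix

section SchurTest

variable {m n : ℕ} (A : Matrix (Fin m) (Fin n) ℝ)

lemma sq_mulVec_apply_le (x : Fin n → ℝ) (i : Fin m) :
    (A *ᵥ x) i ^ 2 ≤ (∑ j, |A i j|) * ∑ j, |A i j| * x j ^ 2 := by
  calc (A *ᵥ x) i ^ 2 ≤ (∑ j, |A i j| * |x j|) ^ 2 := by
        rw [← sq_abs]
        gcongr
        simpa only [mulVec, dotProduct, abs_mul] using abs_sum_le_sum_abs (fun j => A i j * x j) _
    _ ≤ _ := sum_sq_le_sum_mul_sum_of_sq_le_mul _ (fun _ _ => abs_nonneg _)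
        (fun _ _ => by positivity) (fun j _ => le_of_eq (by rw [mul_pow, sq_abs (x j)]; ring))

lemma sum_sq_mulVec_le {R C : ℝ} (hR : 0 ≤ R) (hrow : ∀ i, ∑ j, |A i j| ≤ R)
    (hcol : ∀ j, ∑ i, |A i j| ≤ C) (x : Fin n → ℝ) :
    ∑ i, (A *ᵥ x) i ^ 2 ≤ R * C * ∑ j, x j ^ 2 :=
  calc ∑ i, (A *ᵥ x) i ^ 2 ≤ ∑ i, R * ∑ j, |A i j| * x j ^ 2 := by
        gcongr with i
        exact (sq_mulVec_apply_le A x i).trans (by gcongr; exact hrow i)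
    _ = R * ∑ j, (∑ i, |A i j|) * x j ^ 2 := by
        rw [← mul_sum, sum_comm]; simp_rw [sum_mul]
    _ ≤ R * ∑ j, C * x j ^ 2 := by gcongr with j; exact hcol j
    _ = R * C * ∑ j, x j ^ 2 := by rw [← mul_sum, mul_assoc]

theorem matrixSpectralNorm_le_sqrt_mul_of_sum_abs_le {R C : ℝ} (hR : 0 ≤ R)
    (hrow : ∀ i, ∑ j, |A i j| ≤ R) (hcol : ∀ j, ∑ i, |A i j| ≤ C) :
    matrixSpectralNorm A ≤ √(R * C) := by
  refine ContinuousLinearMap.opNorm_le_bound _ (Real.sqrt_nonneg _) fun x => ?_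
  rw [LinearMap.coe_toContinuousLinearMap', toLpLin_apply,
    EuclideanSpace.norm_eq, EuclideanSpace.norm_eq, ← Real.sqrt_mul' _ (by positivity)]
  gcongr
  simpa only [Real.norm_eq_abs, sq_abs] using sum_sq_mulVec_le A hR hrow hcol x.ofLp

theorem matrixSpectralNorm_le_of_isSymm {A : Matrix (Fin n) (Fin n) ℝ} (hA : A.IsSymm) {K : ℝ}
    (hK : 0 ≤ K) (hrow : ∀ i, ∑ j, |A i j| ≤ K) : matrixSpectralNorm A ≤ K := by
  have hcol : ∀ j, ∑ i, |A i j| ≤ K := fun j => by simpa only [hA.apply j] using hrow j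
  simpa only [Real.sqrt_mul_self hK] using
    matrixSpectralNorm_le_sqrt_mul_of_sum_abs_le A hK hrow hcol

end SchurTest

lemma sum_abs_mul_diagonal_mul_transpose_apply_le {ι κ μ : Type*} [Fintype κ] [Fintype μ]
    [DecidableEq κ] (A : Matrix ι κ ℝ) (B : Matrix μ κ ℝ) {d : κ → ℝ} (hd : ∀ k, 0 ≤ d k)
    {C : ℝ} (hcol : ∀ k, ∑ j, |B j k| ≤ C) (i : ι) :
    ∑ j, |(A * diagonal d * Bᵀ) i j| ≤ (∑ k, |A i k| * d k) * C :=
  calc ∑ j, |(A * diagonal d * Bᵀ) i j| ≤ ∑ j, ∑ k, |A i k| * d k * |B j k| := by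
        gcongr with j
        rw [mul_apply]
        simp only [mul_diagonal, transpose_apply]
        refine (abs_sum_le_sum_abs _ _).trans_eq (sum_congr rfl fun k _ => ?_)
        rw [abs_mul, abs_mul, abs_of_nonneg (hd k)]
    _ = ∑ k, |A i k| * d k * ∑ j, |B j k| := by rw [sum_comm]; simp_rw [mul_sum]
    _ ≤ ∑ k, |A i k| * d k * C := by
        gcongr with k
        · exact mul_nonneg (abs_nonneg _) (hd k)
        · exact hcol k
    _ = (∑ k, |A i k| * d k) * C := (sum_mul ..).symm

def bandToeplitz {m n p : ℕ} (θ : Fin (p + 1) → ℝ) : Matrix (Fin m) (Fin n) ℝ :=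
  of fun i j => if (i : ℕ) ≤ (j : ℕ) ∧ (j : ℕ) ≤ (i : ℕ) + p then
    θ ⟨p - ((j : ℕ) - (i : ℕ)), Nat.lt_succ_of_le (Nat.sub_le p _)⟩ else 0

lemma sum_abs_bandToeplitz_apply_le {m n p : ℕ} (θ : Fin (p + 1) → ℝ) (j : Fin n) :
    ∑ i : Fin m, |bandToeplitz (n := n) θ i j| ≤ ∑ k, |θ k| := by
  set S := univ.filter fun i : Fin m => (i : ℕ) ≤ j ∧ (j : ℕ) ≤ i + p
  let σ : Fin m → Fin (p + 1) := fun i => ⟨p - (j - i), Nat.lt_succ_of_le (Nat.sub_le p _)⟩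
  have hσ : Set.InjOn σ S := fun a ha b hb hab => by
    simp only [S, coe_filter, mem_univ, true_and, Set.mem_ofPred_eq] at ha hb
    have := congrArg Fin.val hab
    simp only [σ] at this
    exact Fin.ext (by omega)
  calc ∑ i : Fin m, |bandToeplitz (n := n) θ i j| = ∑ i ∈ S, |θ (σ i)| := by
        rw [sum_filter]
        exact sum_congr rfl fun i _ => by
          simp only [bandToeplitz, of_apply, apply_ite abs, abs_zero]; rfl
    _ = ∑ k ∈ S.image σ, |θ k| := (sum_image (f := fun k => |θ k|) hσ).symm
    _ ≤ ∑ k, |θ k| := sum_le_univ_sum_of_nonneg fun _ => abs_nonneg _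

lemma sum_abs_bandToeplitz_mul_eq {m n p : ℕ} (θ : Fin (p + 1) → ℝ) (d : Fin n → ℝ) (i : Fin m)
    (hi : (i : ℕ) + p < n) :
    ∑ j, |bandToeplitz θ i j| * d j =
      ∑ l : Fin (p + 1), d ⟨(i : ℕ) + (l : ℕ), by omega⟩ * |θ ⟨p - (l : ℕ), by omega⟩| := by
  refine (sum_of_injOn (fun l : Fin (p + 1) => (⟨i + l, by omega⟩ : Fin n))
    (fun a _ b _ hab => Fin.ext (by simpa using congrArg Fin.val hab)) (by simp) ?_ ?_).symm
  · intro j _ hj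
    have hband : ¬((i : ℕ) ≤ j ∧ (j : ℕ) ≤ i + p) := fun ⟨h₁, h₂⟩ =>
      hj ⟨⟨j - i, by omega⟩, by simp, Fin.ext (by simp only; omega)⟩
    simp [bandToeplitz, hband]
  · intro l _
    simp [bandToeplitz, mul_comm, Fin.is_le l]

/-- With `H` the filter matrix and `D` diagonal with nonnegative entries, the maximum absolute
row sum of `H D Hᵀ` is at most `max_i Σ_{l=0}^p D_{i+l} |θ_{p-l}| · Σ_{k=0}^p |θ_k|`, and hence
so is the spectral norm. -/
theorem filter_matrix_conj_diagonal_upper_bound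
    (p : ℕ) (θ : Fin (p + 1) → ℝ) (d : Fin (2 * p) → ℝ) (hd : ∀ l, 0 ≤ d l)
    (H : Matrix (Fin p) (Fin (2 * p)) ℝ)
    (hH : ∀ (i : Fin p) (j : Fin (2 * p)),
      H i j = if (i : ℕ) ≤ (j : ℕ) ∧ (j : ℕ) ≤ (i : ℕ) + p then
          θ ⟨p - ((j : ℕ) - (i : ℕ)), Nat.lt_succ_of_le (Nat.sub_le p _)⟩
        else 0) :
    (∀ i : Fin p, ∑ j : Fin p, |(H * Matrix.diagonal d * H.transpose) i j| ≤
        (⨆ i' : Fin p, ∑ l : Fin (p + 1),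
            d ⟨(i' : ℕ) + (l : ℕ), by omega⟩ * |θ ⟨p - (l : ℕ), by omega⟩|) *
          ∑ k : Fin (p + 1), |θ k|) ∧
    matrixSpectralNorm (H * Matrix.diagonal d * H.transpose) ≤
      (⨆ i' : Fin p, ∑ l : Fin (p + 1),
          d ⟨(i' : ℕ) + (l : ℕ), by omega⟩ * |θ ⟨p - (l : ℕ), by omega⟩|) *
        ∑ k : Fin (p + 1), |θ k| := by
  have hband : H = bandToeplitz θ := Matrix.ext hH
  set w : Fin p → ℝ := fun i' => ∑ l : Fin (p + 1),
    d ⟨(i' : ℕ) + (l : ℕ), by omega⟩ * |θ ⟨p - (l : ℕ), by omega⟩|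
  have hrow (i : Fin p) : ∑ j, |(H * diagonal d * Hᵀ) i j| ≤ (⨆ i', w i') * ∑ k, |θ k| := by
    refine (sum_abs_mul_diagonal_mul_transpose_apply_le H H hd
      (hband ▸ sum_abs_bandToeplitz_apply_le θ) i).trans ?_
    rw [hband, sum_abs_bandToeplitz_mul_eq θ d i (by omega)]
    gcongr
    exact le_ciSup (Set.finite_range w).bddAbove i
  have hsymm : (H * diagonal d * Hᵀ).IsSymm := by
    simp only [IsSymm, transpose_mul, transpose_transpose, diagonal_transpose, Matrix.mul_assoc]
  have hw : 0 ≤ (⨆ i', w i') * ∑ k, |θ k| := by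
    refine mul_nonneg (Real.iSup_nonneg fun i' => ?_) (sum_nonneg fun k _ => abs_nonneg _)
    exact sum_nonneg fun l _ => mul_nonneg (hd _) (abs_nonneg _)
  exact ⟨hrow, matrixSpectralNorm_le_of_isSymm hsymm hw hrow⟩
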